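/- Let B = B0 + B1ε ∈ DQ^{k×l} and C = C0 + C1ε ∈ DQ^{n×l}. Set B2 = R_{B0}·B1, C2 = C1 − C0·B0†·B1, B00 = B2·L_{B0}, C00 = C2·L_{B0}, and assume C0·L_{B0} = 0 and C00·L_{B00} = 0. Then a dual quaternion matrix Y = Y0 + Y1ε ∈ DQ^{n×k} satisfies YB = C if and only if there exist quaternion matrices W1, W2 of appropriate sizes such that, with W = C00·B00† + W2·R_{B00}, one has Y0 = C0·B0† + W·R_{B0} and Y1 = (C2 − W·B2)·B0† + W1·R_{B0}. -/

import Mathlib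

/-!
Comparing standard and infinitesimal parts, `Y B = C` says `Y0 B0 = C0` and `Y1 B0 = C1 - Y0 B1`.
Both are equations `X A = D` in which `A` has an inner inverse `A†`; such an equation is solved by
every `X = D A† + W R_A` as soon as `D L_A = 0`, and every solution has this form with `W = X`.
Once `Y0 B0 = C0`, the right-hand side `C1 - Y0 B1` equals `C2 - Y0 B2`, and its solvability
condition `(C2 - Y0 B2) L_{B0} = 0` is the equation `Y0 B00 = C00`, which produces `W`.
-/

open Matrix

/-- Quaternion matrices of size `p × q`. -/
abbrev QM (p q : ℕ) := Matrix (Fin p) (Fin q) (Quaternion ℝ)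

/-- `Ad` is a Moore–Penrose inverse of the quaternion matrix `A`. -/
def IsMP {p q : ℕ} (A : QM p q) (Ad : QM q p) : Prop :=
  A * Ad * A = A ∧ Ad * A * Ad = Ad ∧ (A * Ad)ᴴ = A * Ad ∧ (Ad * A)ᴴ = Ad * A

/-- The dual quaternion matrix `A0 + A1 ε`, realized as a matrix over the
dual numbers (dual quaternions) `DualNumber (Quaternion ℝ)`. -/
noncomputable def dm {p q : ℕ} (A0 A1 : QM p q) :
    Matrix (Fin p) (Fin q) (DualNumber (Quaternion ℝ)) :=
  A0.map TrivSqZeroExt.inl + A1.map TrivSqZeroExt.inr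

/-- The rank of a quaternion matrix: the dimension (over `ℍ`) of the left
`ℍ`-submodule spanned by its rows. -/
noncomputable def qrank {m n : Type*} (A : Matrix m n (Quaternion ℝ)) : ℕ :=
  Module.finrank (Quaternion ℝ)
    (Submodule.span (Quaternion ℝ) (Set.range (fun i : m => fun j : n => A i j)))

namespace Matrix

variable {R : Type*} [Ring R] {m n p : Type*} [Fintype n] [Fintype p]

theorem eq_mul_mul_add_mul_one_sub [DecidableEq n] (X : Matrix m n R) (A : Matrix n p R)
    (Ad : Matrix p n R) :
    X = X * A * Ad + X * (1 - A * Ad) := by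
  rw [Matrix.mul_sub, Matrix.mul_one, Matrix.mul_assoc]
  abel

theorem one_sub_mul_mul_self_eq_zero [DecidableEq n] {A : Matrix n p R} {Ad : Matrix p n R}
    (hA : A * Ad * A = A) : (1 - A * Ad) * A = 0 := by
  rw [Matrix.sub_mul, Matrix.one_mul, hA, sub_self]

theorem mul_one_sub_mul_self_eq_zero [DecidableEq p] {A : Matrix n p R} {Ad : Matrix p n R}
    (hA : A * Ad * A = A) : A * (1 - Ad * A) = 0 := by
  rw [Matrix.mul_sub, Matrix.mul_one, ← Matrix.mul_assoc, hA, sub_self]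

theorem mul_one_sub_mul_mul_of_mul_eq [DecidableEq n] {q : Type*} {A : Matrix n p R}
    {Ad : Matrix p n R} {D : Matrix m p R} {X : Matrix m n R} (B : Matrix n q R) (hX : X * A = D) :
    X * ((1 - A * Ad) * B) = X * B - D * Ad * B := by
  simp only [← hX, Matrix.sub_mul, Matrix.one_mul, Matrix.mul_sub, Matrix.mul_assoc]

theorem mul_eq_of_eq_mul_add_mul_one_sub [DecidableEq n] [DecidableEq p] {A : Matrix n p R}
    {Ad : Matrix p n R} {D : Matrix m p R} {X W : Matrix m n R} (hA : A * Ad * A = A)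
    (hD : D * (1 - Ad * A) = 0)
    (hX : X = D * Ad + W * (1 - A * Ad)) : X * A = D := by
  rw [hX, Matrix.add_mul, Matrix.mul_assoc W, one_sub_mul_mul_self_eq_zero hA, Matrix.mul_zero,
    add_zero, Matrix.mul_assoc]
  rw [Matrix.mul_sub, Matrix.mul_one, sub_eq_zero] at hD
  exact hD.symm

end Matrix

theorem dm_apply_fst {p q : ℕ} (A0 A1 : QM p q) (i : Fin p) (j : Fin q) :
    (dm A0 A1 i j).fst = A0 i j := by
  simp [dm]

theorem dm_apply_snd {p q : ℕ} (A0 A1 : QM p q) (i : Fin p) (j : Fin q) :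
    (dm A0 A1 i j).snd = A1 i j := by
  simp [dm]

theorem dm_inj {p q : ℕ} {A0 A1 B0 B1 : QM p q} :
    dm A0 A1 = dm B0 B1 ↔ A0 = B0 ∧ A1 = B1 := by
  refine ⟨fun h => ⟨?_, ?_⟩, fun ⟨h0, h1⟩ => h0 ▸ h1 ▸ rfl⟩ <;>
    refine Matrix.ext fun i j => ?_
  · simpa only [dm_apply_fst] using congrArg TrivSqZeroExt.fst (congrFun (congrFun h i) j)
  · simpa only [dm_apply_snd] using congrArg TrivSqZeroExt.snd (congrFun (congrFun h i) j)

theorem dm_mul {p q r : ℕ} (A0 A1 : QM p q) (B0 B1 : QM q r) :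
    dm A0 A1 * dm B0 B1 = dm (A0 * B0) (A0 * B1 + A1 * B0) := by
  refine Matrix.ext fun i j => TrivSqZeroExt.ext ?_ ?_
  · simp only [dm_apply_fst, Matrix.mul_apply, TrivSqZeroExt.fst_sum, TrivSqZeroExt.fst_mul]
  · simp only [dm_apply_fst, dm_apply_snd, Matrix.mul_apply, Matrix.add_apply,
      TrivSqZeroExt.snd_sum, TrivSqZeroExt.snd_mul, smul_eq_mul, MulOpposite.smul_eq_mul_unop,
      MulOpposite.unop_op, Finset.sum_add_distrib]

/-- under the solvability conditions, `Y = Y0 + Y1 ε` solves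
`Y B = C` iff it has the displayed form. -/
theorem stmt16 {k l n : ℕ}
    (B0 B1 : QM k l) (C0 C1 : QM n l)
    (B0d : QM l k) (hB0d : IsMP B0 B0d)
    (B2 : QM k l) (hB2 : B2 = (1 - B0 * B0d) * B1)
    (C2 : QM n l) (hC2 : C2 = C1 - C0 * B0d * B1)
    (B00 : QM k l) (hB00 : B00 = B2 * (1 - B0d * B0))
    (B00d : QM l k) (hB00d : IsMP B00 B00d)
    (C00 : QM n l) (hC00 : C00 = C2 * (1 - B0d * B0))
    (hcond1 : C0 * (1 - B0d * B0) = 0)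
    (hcond2 : C00 * (1 - B00d * B00) = 0)
    (Y0 Y1 : QM n k) :
    dm Y0 Y1 * dm B0 B1 = dm C0 C1 ↔
      ∃ (W1 W2 : QM n k) (W : QM n k),
        W = C00 * B00d + W2 * (1 - B00 * B00d) ∧
        Y0 = C0 * B0d + W * (1 - B0 * B0d) ∧
        Y1 = (C2 - W * B2) * B0d + W1 * (1 - B0 * B0d) := by
  have hL : ∀ X : QM n k, (C2 - X * B2) * (1 - B0d * B0) = C00 - X * B00 := fun X => by
    rw [Matrix.sub_mul, hC00, hB00, Matrix.mul_assoc]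
  rw [dm_mul, dm_inj]
  constructor
  · rintro ⟨h0, h1⟩
    have hY1 : Y1 * B0 = C2 - Y0 * B2 := by
      rw [hC2, hB2, mul_one_sub_mul_mul_of_mul_eq B1 h0, ← h1]
      abel
    have hY0 : Y0 * B00 = C00 := by
      rw [eq_comm, ← sub_eq_zero, ← hL, ← hY1, Matrix.mul_assoc,
        mul_one_sub_mul_self_eq_zero hB0d.1, Matrix.mul_zero]
    refine ⟨Y1, Y0, Y0, ?_, ?_, ?_⟩
    · rw [← hY0]; exact eq_mul_mul_add_mul_one_sub Y0 B00 B00d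
    · rw [← h0]; exact eq_mul_mul_add_mul_one_sub Y0 B0 B0d
    · rw [← hY1]; exact eq_mul_mul_add_mul_one_sub Y1 B0 B0d
  · rintro ⟨W1, W2, W, hW, hY0, hY1⟩
    have hWB00 : W * B00 = C00 := mul_eq_of_eq_mul_add_mul_one_sub hB00d.1 hcond2 hW
    have hY1B0 : Y1 * B0 = C2 - W * B2 :=
      mul_eq_of_eq_mul_add_mul_one_sub hB0d.1 (by rw [hL, hWB00, sub_self]) hY1
    refine ⟨mul_eq_of_eq_mul_add_mul_one_sub hB0d.1 hcond1 hY0, ?_⟩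
    rw [hY1B0, hY0, hC2, hB2, Matrix.add_mul, Matrix.mul_assoc W]
    abel
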